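/- Let M : [0,1] → ℝ be continuous with M(x) ≥ ε > 0 and let K₁, K₂ : [0,1]² → ℝ be continuous with |K₁(x,y)| < ε and |K₂(x,y)| < ε for all (x,y) ∈ [0,1]². Define 𝒫 = 𝒯 + 𝒮 where (𝒯w)(x) = M(x)w(x) and (𝒮w)(x) = ∫₀ˣ K₁(x,y)w(y)dy + ∫ₓ¹ K₂(x,y)w(y)dy. Then 𝒫 is invertible on L²(0,1) and 𝒫⁻¹ = (∑ₖ₌₀^∞ (−𝒯⁻¹𝒮)ᵏ) 𝒯⁻¹ with (𝒯⁻¹w)(x) = M(x)⁻¹w(x). -/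

import Mathlib

open MeasureTheory intervalIntegral

/-! Since `M ≥ ε`, multiplication by `M⁻¹` has norm at most `1/ε`. The kernels are continuous on
the compact square, so `|Kᵢ| ≤ c` there for some `c < ε`; then `|(𝒮w)(x)| ≤ c‖w‖₁ ≤ c‖w‖₂` for
every `x`, so `‖𝒮‖ ≤ c` on the probability space `(0,1]`. Hence `‖𝒯⁻¹𝒮‖ < 1`, and
`𝒫 = 𝒯(1 + 𝒯⁻¹𝒮)` is inverted by the Neumann series. -/

theorem IsCompact.exists_lt_forall_le_of_forall_lt {X : Type*} [TopologicalSpace X] {s : Set X}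
    (hs : IsCompact s) {f : X → ℝ} (hf : ContinuousOn f s) {ε : ℝ} (h : ∀ x ∈ s, f x < ε) :
    ∃ c < ε, ∀ x ∈ s, f x ≤ c :=
  hs.exists_forall_le' (α := ℝᵒᵈ) hf h

section NeumannSeries

variable {R : Type*} [NormedRing R] [HasSummableGeomSeries R]

noncomputable def neumannInv (Tinv S : R) : R := (∑' k : ℕ, (-(Tinv * S)) ^ k) * Tinv

variable {T S Tinv : R}

theorem add_mul_neumannInv (hT : T * Tinv = 1) (hS : ‖Tinv * S‖ < 1) :
    (T + S) * neumannInv Tinv S = 1 := by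
  have hfactor : T + S = T * (1 + Tinv * S) := by
    rw [mul_add, mul_one, ← mul_assoc, hT, one_mul]
  have hgeom : (1 + Tinv * S) * ∑' k : ℕ, (-(Tinv * S)) ^ k = 1 := by
    simpa using mul_neg_geom_series (-(Tinv * S)) (by rwa [norm_neg])
  rw [neumannInv, hfactor, mul_assoc, ← mul_assoc (1 + _), hgeom, one_mul, hT]

theorem neumannInv_mul_add (hT : Tinv * T = 1) (hS : ‖Tinv * S‖ < 1) :
    neumannInv Tinv S * (T + S) = 1 := by
  have hgeom : (∑' k : ℕ, (-(Tinv * S)) ^ k) * (1 + Tinv * S) = 1 := by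
    simpa using geom_series_mul_neg (-(Tinv * S)) (by rwa [norm_neg])
  rw [neumannInv, mul_assoc, mul_add, hT, hgeom]

end NeumannSeries

section MultiplicationOperator

variable {α 𝕜 : Type*} [MeasurableSpace α] {μ : Measure α} [NontriviallyNormedField 𝕜]
  {p : ENNReal} [Fact (1 ≤ p)] {T U : Lp 𝕜 p μ →L[𝕜] Lp 𝕜 p μ} {g h : α → 𝕜}

theorem opNorm_le_of_ae_eq_mul {C : ℝ} (hC : 0 ≤ C) (hg : ∀ᵐ x ∂μ, ‖g x‖ ≤ C)
    (hT : ∀ w, T w =ᵐ[μ] fun x => g x * w x) : ‖T‖ ≤ C :=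
  T.opNorm_le_bound hC fun w => Lp.norm_le_mul_norm_of_ae_le_mul <| by
    filter_upwards [hT w, hg] with x hTx hgx
    rw [hTx, norm_mul]
    exact mul_le_mul_of_nonneg_right hgx (norm_nonneg _)

theorem mul_eq_one_of_ae_eq_mul (hT : ∀ w, T w =ᵐ[μ] fun x => g x * w x)
    (hU : ∀ w, U w =ᵐ[μ] fun x => h x * w x) (hgh : ∀ᵐ x ∂μ, g x * h x = 1) : T * U = 1 := by
  ext1 w
  refine Lp.ext ?_
  filter_upwards [hT (U w), hU w, hgh] with x hTx hUx hx
  rw [mul_apply_eq_comp, one_apply_eq_self, hTx, hUx, ← mul_assoc, hx, one_mul]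

end MultiplicationOperator

theorem Lp.integral_norm_le_norm {α E : Type*} [MeasurableSpace α] {μ : Measure α}
    [IsProbabilityMeasure μ] [NormedAddCommGroup E] {p : ENNReal} [Fact (1 ≤ p)] (f : Lp E p μ) :
    ∫ x, ‖f x‖ ∂μ ≤ ‖f‖ := by
  rw [integral_norm_eq_lintegral_enorm (Lp.aestronglyMeasurable f),
    ← eLpNorm_one_eq_lintegral_enorm, Lp.norm_def]
  exact ENNReal.toReal_mono (Lp.eLpNorm_ne_top f)
    (eLpNorm_le_eLpNorm_of_exponent_le Fact.out (Lp.aestronglyMeasurable f))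

theorem norm_integral_add_integral_le {a b x c : ℝ} {k₁ k₂ w : ℝ → ℝ} (hx : x ∈ Set.Icc a b)
    (hw : IntervalIntegrable w volume a b) (hk₁ : ∀ y ∈ Set.Icc a b, |k₁ y| ≤ c)
    (hk₂ : ∀ y ∈ Set.Icc a b, |k₂ y| ≤ c) :
    ‖(∫ y in a..x, k₁ y * w y) + ∫ y in x..b, k₂ y * w y‖ ≤ c * ∫ y in a..b, ‖w y‖ := by
  have hcw : IntervalIntegrable (fun y => c * ‖w y‖) volume a b := hw.norm.const_mul c
  have hsub : ∀ {u v}, u ∈ Set.Icc a b → v ∈ Set.Icc a b → Set.uIcc u v ⊆ Set.uIcc a b :=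
    fun hu hv => Set.uIcc_subset_uIcc (Set.Icc_subset_uIcc hu) (Set.Icc_subset_uIcc hv)
  have hpiece : ∀ {k : ℝ → ℝ} {u v}, (∀ y ∈ Set.Icc a b, |k y| ≤ c) → a ≤ u → u ≤ v → v ≤ b →
      ‖∫ y in u..v, k y * w y‖ ≤ ∫ y in u..v, c * ‖w y‖ := by
    intro k u v hk hau huv hvb
    refine norm_integral_le_of_norm_le huv (ae_of_all _ fun y hy => ?_)
      (hcw.mono_set (hsub ⟨hau, huv.trans hvb⟩ ⟨hau.trans huv, hvb⟩))
    rw [norm_mul, Real.norm_eq_abs]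
    exact mul_le_mul_of_nonneg_right (hk y ⟨hau.trans hy.1.le, hy.2.trans hvb⟩) (norm_nonneg _)
  calc ‖(∫ y in a..x, k₁ y * w y) + ∫ y in x..b, k₂ y * w y‖
      ≤ ‖∫ y in a..x, k₁ y * w y‖ + ‖∫ y in x..b, k₂ y * w y‖ := norm_add_le _ _
    _ ≤ (∫ y in a..x, c * ‖w y‖) + ∫ y in x..b, c * ‖w y‖ :=
        add_le_add (hpiece hk₁ le_rfl hx.1 hx.2) (hpiece hk₂ hx.1 hx.2 le_rfl)
    _ = c * ∫ y in a..b, ‖w y‖ := by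
        have hab : a ≤ b := hx.1.trans hx.2
        rw [integral_add_adjacent_intervals (hcw.mono_set (hsub (Set.left_mem_Icc.2 hab) hx))
          (hcw.mono_set (hsub hx (Set.right_mem_Icc.2 hab))), intervalIntegral.integral_const_mul]

instance : IsProbabilityMeasure (volume.restrict (Set.Ioc (0:ℝ) 1)) := ⟨by simp⟩

theorem opNorm_le_of_kernel_bound {p : ENNReal} [Fact (1 ≤ p)] {K₁ K₂ : ℝ → ℝ → ℝ} {c : ℝ}
    (hK₁ : ∀ x ∈ Set.Icc (0:ℝ) 1, ∀ y ∈ Set.Icc (0:ℝ) 1, |K₁ x y| ≤ c)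
    (hK₂ : ∀ x ∈ Set.Icc (0:ℝ) 1, ∀ y ∈ Set.Icc (0:ℝ) 1, |K₂ x y| ≤ c)
    {S : Lp ℝ p (volume.restrict (Set.Ioc (0:ℝ) 1)) →L[ℝ]
      Lp ℝ p (volume.restrict (Set.Ioc (0:ℝ) 1))}
    (hS : ∀ w, (S w : ℝ → ℝ) =ᵐ[volume.restrict (Set.Ioc (0:ℝ) 1)]
      fun x => (∫ y in (0:ℝ)..x, K₁ x y * w y) + ∫ y in x..(1:ℝ), K₂ x y * w y) :
    ‖S‖ ≤ c := by
  have hc : 0 ≤ c := (abs_nonneg _).trans (hK₁ 0 (by simp) 0 (by simp))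
  refine S.opNorm_le_bound hc fun w => ?_
  have hw : IntervalIntegrable w volume 0 1 :=
    (intervalIntegrable_iff_integrableOn_Ioc_of_le zero_le_one).2 ((Lp.memLp w).integrable Fact.out)
  have hpointwise : ∀ᵐ x ∂(volume.restrict (Set.Ioc (0:ℝ) 1)),
      ‖S w x‖ ≤ c * ∫ y in (0:ℝ)..1, ‖w y‖ := by
    filter_upwards [hS w, ae_restrict_mem measurableSet_Ioc] with x hSx hx
    rw [hSx]
    have hx' := Set.Ioc_subset_Icc_self hx
    exact norm_integral_add_integral_le hx' hw (hK₁ x hx') (hK₂ x hx')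
  calc ‖S w‖ ≤ c * ∫ y in (0:ℝ)..1, ‖w y‖ := by
        simpa [measureUnivNNReal] using Lp.norm_le_of_ae_bound
          (mul_nonneg hc (integral_nonneg zero_le_one fun _ _ => norm_nonneg _)) hpointwise
    _ = c * ∫ y, ‖w y‖ ∂(volume.restrict (Set.Ioc (0:ℝ) 1)) := by rw [integral_of_le zero_le_one]
    _ ≤ c * ‖w‖ := mul_le_mul_of_nonneg_left (Lp.integral_norm_le_norm w) hc

theorem inverse_of_positive_operator_general
    (μ : Measure ℝ) (hμ : μ = volume.restrict (Set.Ioc (0:ℝ) 1))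
    (M : ℝ → ℝ) (ε : ℝ) (hε : 0 < ε)
    (hMε : ∀ x ∈ Set.Icc (0:ℝ) 1, ε ≤ M x)
    (K₁ K₂ : ℝ → ℝ → ℝ)
    (hK₁ : Continuous fun p : ℝ × ℝ => K₁ p.1 p.2)
    (hK₂ : Continuous fun p : ℝ × ℝ => K₂ p.1 p.2)
    (hK₁ε : ∀ x ∈ Set.Icc (0:ℝ) 1, ∀ y ∈ Set.Icc (0:ℝ) 1, |K₁ x y| < ε)
    (hK₂ε : ∀ x ∈ Set.Icc (0:ℝ) 1, ∀ y ∈ Set.Icc (0:ℝ) 1, |K₂ x y| < ε)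
    (T S Tinv : Lp ℝ 2 μ →L[ℝ] Lp ℝ 2 μ)
    (hT : ∀ w : Lp ℝ 2 μ, (T w : ℝ → ℝ) =ᵐ[μ] fun x => M x * w x)
    (hS : ∀ w : Lp ℝ 2 μ, (S w : ℝ → ℝ) =ᵐ[μ]
      fun x => (∫ y in (0:ℝ)..x, K₁ x y * w y) + ∫ y in x..(1:ℝ), K₂ x y * w y)
    (hTinv : ∀ w : Lp ℝ 2 μ, (Tinv w : ℝ → ℝ) =ᵐ[μ] fun x => (M x)⁻¹ * w x) :
    ∃ Pinv : Lp ℝ 2 μ →L[ℝ] Lp ℝ 2 μ,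
      ((T + S) * Pinv = 1 ∧ Pinv * (T + S) = 1) ∧
      Pinv = (∑' k : ℕ, (-(Tinv * S)) ^ k) * Tinv := by
  subst hμ
  have hMε_ae : ∀ᵐ x ∂(volume.restrict (Set.Ioc (0:ℝ) 1)), ε ≤ M x :=
    (ae_restrict_mem measurableSet_Ioc).mono fun x hx => hMε x (Set.Ioc_subset_Icc_self hx)
  obtain ⟨c, hcε, hc⟩ := (isCompact_Icc.prod isCompact_Icc).exists_lt_forall_le_of_forall_lt
    (hK₁.abs.max hK₂.abs).continuousOn fun p hp => max_lt (hK₁ε _ hp.1 _ hp.2) (hK₂ε _ hp.1 _ hp.2)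
  have hS_norm : ‖S‖ ≤ c :=
    opNorm_le_of_kernel_bound (fun x hx y hy => (le_max_left _ _).trans (hc (x, y) ⟨hx, hy⟩))
      (fun x hx y hy => (le_max_right _ _).trans (hc (x, y) ⟨hx, hy⟩)) hS
  have hTinv_norm : ‖Tinv‖ ≤ ε⁻¹ := by
    refine opNorm_le_of_ae_eq_mul (inv_nonneg.2 hε.le) (hMε_ae.mono fun x hx => ?_) hTinv
    rw [norm_inv, Real.norm_of_nonneg (hε.le.trans hx)]
    exact inv_anti₀ hε hx
  have hsmall : ‖Tinv * S‖ < 1 :=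
    calc ‖Tinv * S‖ ≤ ε⁻¹ * c :=
          (norm_mul_le _ _).trans (mul_le_mul hTinv_norm hS_norm (norm_nonneg _) (by positivity))
      _ < ε⁻¹ * ε := mul_lt_mul_of_pos_left hcε (inv_pos.2 hε)
      _ = 1 := inv_mul_cancel₀ hε.ne'
  have hM_ne : ∀ᵐ x ∂(volume.restrict (Set.Ioc (0:ℝ) 1)), M x ≠ 0 :=
    hMε_ae.mono fun x hx => (hε.trans_le hx).ne'
  refine ⟨neumannInv Tinv S, ⟨add_mul_neumannInv ?_ hsmall, neumannInv_mul_add ?_ hsmall⟩, rfl⟩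
  · exact mul_eq_one_of_ae_eq_mul hT hTinv (hM_ne.mono fun x hx => mul_inv_cancel₀ hx)
  · exact mul_eq_one_of_ae_eq_mul hTinv hT (hM_ne.mono fun x hx => inv_mul_cancel₀ hx)

/-- Theorem 3 of the paper: `𝒫 = 𝒯 + 𝒮`, where `𝒯` is multiplication by `M ≥ ε > 0` and `𝒮`
is the integral operator with semi-separable kernel bounded by `ε` in absolute value, is
invertible on `L²(0,1)` with `𝒫⁻¹ = (∑ₖ (−𝒯⁻¹𝒮)ᵏ)𝒯⁻¹`. -/
theorem inverse_of_positive_operator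
    (μ : Measure ℝ) (hμ : μ = volume.restrict (Set.Ioc (0:ℝ) 1))
    (M : ℝ → ℝ) (hM : Continuous M) (ε : ℝ) (hε : 0 < ε)
    (hMε : ∀ x ∈ Set.Icc (0:ℝ) 1, ε ≤ M x)
    (K₁ K₂ : ℝ → ℝ → ℝ)
    (hK₁ : Continuous fun p : ℝ × ℝ => K₁ p.1 p.2)
    (hK₂ : Continuous fun p : ℝ × ℝ => K₂ p.1 p.2)
    (hK₁ε : ∀ x ∈ Set.Icc (0:ℝ) 1, ∀ y ∈ Set.Icc (0:ℝ) 1, |K₁ x y| < ε)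
    (hK₂ε : ∀ x ∈ Set.Icc (0:ℝ) 1, ∀ y ∈ Set.Icc (0:ℝ) 1, |K₂ x y| < ε)
    (T S Tinv : Lp ℝ 2 μ →L[ℝ] Lp ℝ 2 μ)
    (hT : ∀ w : Lp ℝ 2 μ, (T w : ℝ → ℝ) =ᵐ[μ] fun x => M x * w x)
    (hS : ∀ w : Lp ℝ 2 μ, (S w : ℝ → ℝ) =ᵐ[μ]
      fun x => (∫ y in (0:ℝ)..x, K₁ x y * w y) + ∫ y in x..(1:ℝ), K₂ x y * w y)
    (hTinv : ∀ w : Lp ℝ 2 μ, (Tinv w : ℝ → ℝ) =ᵐ[μ] fun x => (M x)⁻¹ * w x) :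
    ∃ Pinv : Lp ℝ 2 μ →L[ℝ] Lp ℝ 2 μ,
      ((T + S) * Pinv = 1 ∧ Pinv * (T + S) = 1) ∧
      Pinv = (∑' k : ℕ, (-(Tinv * S)) ^ k) * Tinv :=
  inverse_of_positive_operator_general μ hμ M ε hε hMε K₁ K₂ hK₁ hK₂ hK₁ε hK₂ε T S Tinv hT hS hTinv
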